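/- arXiv:1105.4221 — 2 statements merged into one kernel-verified Lean document; each statement's English description precedes it below -/
import Mathlib

section
/- Let V : ℝ → ℝ be integrable, let ħ > 0 and E ≠ 0, and let f₊(·,E;ħ) and f₋(·,E;ħ) be the Jost solutions of −ħ² f'' + V f = E² f. Then the Wronskian satisfies |W(f₋(·,E;ħ), f₊(·,E;ħ))| ≥ 2|E|/ħ; in particular {f₋(·,E;ħ), f₊(·,E;ħ)} is a fundamental system. -/
/-!
Since `V` and `E` are real, `f ↦ conj f` preserves the solution space, so for a solution `f` the
Wronskian `W(f, f̄)` is constant, and the asymptotics of the Jost solutions give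
`W(f₋, f̄₋) = 2iE/ħ` and `W(f₊, f̄₊) = -2iE/ħ`. The Plücker-type identity
`|W(f, g)|² = W(f, f̄) W(g, ḡ) + |W(f, ḡ)|²` then yields `|W(f₋, f₊)|² = 4E²/ħ² + |W(f₋, f̄₊)|²`.
-/

open Set Filter Topology MeasureTheory ComplexConjugate

noncomputable def conjWronskian (f : ℝ → ℂ) (x : ℝ) : ℂ :=
  f x * conj (deriv f x) - deriv f x * conj (f x)

lemma deriv_deriv_eq_of_schrodinger {f : ℝ → ℂ} {V : ℝ → ℝ} {hb E : ℝ} (hhb : hb ≠ 0)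
    (hode : ∀ x, -(hb : ℂ) ^ 2 * deriv (deriv f) x + (V x : ℂ) * f x = (E : ℂ) ^ 2 * f x)
    (x : ℝ) : deriv (deriv f) x = ((V x - E ^ 2) / hb ^ 2 : ℝ) * f x := by
  have hbC : (hb : ℂ) ≠ 0 := Complex.ofReal_ne_zero.mpr hhb
  push_cast
  field_simp
  linear_combination -hode x

lemma conjWronskian_mul_unimodular (a b u : ℂ) (hu : ‖u‖ = 1) :
    a * u * conj (b * u) - b * u * conj (a * u) = a * conj b - b * conj a := by
  have huu : u * conj u = 1 := by
    rw [Complex.mul_conj, Complex.normSq_eq_norm_sq, hu]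
    norm_num
  simp only [map_mul]
  linear_combination (a * conj b - b * conj a) * huu

lemma tendsto_conjWronskian {f u : ℝ → ℂ} {l : Filter ℝ} {k : ℂ} (hu : ∀ x, ‖u x‖ = 1)
    (h₀ : Tendsto (fun x => f x * u x) l (𝓝 1))
    (h₁ : Tendsto (fun x => deriv f x * u x) l (𝓝 k)) :
    Tendsto (conjWronskian f) l (𝓝 (conj k - k)) := by
  have h := (h₀.mul (Complex.continuous_conj.tendsto k |>.comp h₁)).sub
    (h₁.mul (Complex.continuous_conj.tendsto 1 |>.comp h₀))
  simp only [Function.comp_def, map_one, one_mul, mul_one] at h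
  refine h.congr fun x => ?_
  exact conjWronskian_mul_unimodular (f x) (deriv f x) (u x) (hu x)

section RealPotential

variable {f : ℝ → ℂ} {q : ℝ → ℝ}

lemma hasDerivAt_conjWronskian (hf : ContDiff ℝ 2 f)
    (hode : ∀ x, deriv (deriv f) x = q x * f x) (x : ℝ) :
    HasDerivAt (conjWronskian f) 0 x := by
  have hf' : Differentiable ℝ (deriv f) :=
    (hf.iterate_deriv' 1 1).differentiable one_ne_zero
  have h₀ : HasDerivAt f (deriv f x) x :=
    (hf.differentiable two_ne_zero x).hasDerivAt
  have h₁ : HasDerivAt (deriv f) (deriv (deriv f) x) x := (hf' x).hasDerivAt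
  refine ((h₀.mul h₁.star).sub (h₁.mul h₀.star)).congr_deriv ?_
  rw [hode x, star_mul', Complex.star_def, Complex.conj_ofReal]
  ring

lemma conjWronskian_eq (hf : ContDiff ℝ 2 f)
    (hode : ∀ x, deriv (deriv f) x = q x * f x) (x y : ℝ) :
    conjWronskian f x = conjWronskian f y :=
  is_const_of_deriv_eq_zero (fun z => (hasDerivAt_conjWronskian hf hode z).differentiableAt)
    (fun z => (hasDerivAt_conjWronskian hf hode z).deriv) x y

lemma conjWronskian_eq_of_tendsto {u : ℝ → ℂ} {l : Filter ℝ} [l.NeBot] {k : ℂ}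
    (hf : ContDiff ℝ 2 f) (hode : ∀ x, deriv (deriv f) x = q x * f x) (hu : ∀ x, ‖u x‖ = 1)
    (h₀ : Tendsto (fun x => f x * u x) l (𝓝 1))
    (h₁ : Tendsto (fun x => deriv f x * u x) l (𝓝 k)) (x : ℝ) :
    conjWronskian f x = conj k - k :=
  tendsto_nhds_unique (tendsto_const_nhds.congr fun y => conjWronskian_eq hf hode x y)
    (tendsto_conjWronskian hu h₀ h₁)

end RealPotential

lemma normSq_wronskian (a a' b b' : ℂ) :
    (Complex.normSq (a * b' - a' * b) : ℂ) =
      (a * conj a' - a' * conj a) * (b * conj b' - b' * conj b) +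
        Complex.normSq (a * conj b' - a' * conj b) := by
  simp only [← Complex.mul_conj, map_sub, map_mul, Complex.conj_conj]
  ring

theorem jost_wronskian_lower_bound_general
    (V : ℝ → ℝ)
    (hb E : ℝ) (hhb : 0 < hb) (hE : E ≠ 0)
    (fp fm : ℝ → ℂ)
    (hfp_smooth : ContDiff ℝ 2 fp) (hfm_smooth : ContDiff ℝ 2 fm)
    (hfp_ode : ∀ x : ℝ,
      -(hb:ℂ)^2 * deriv (deriv fp) x + (V x : ℂ) * fp x = (E:ℂ)^2 * fp x)
    (hfm_ode : ∀ x : ℝ,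
      -(hb:ℂ)^2 * deriv (deriv fm) x + (V x : ℂ) * fm x = (E:ℂ)^2 * fm x)
    (hfp_lim : Tendsto (fun x : ℝ => fp x * Complex.exp (-(Complex.I * E * x / hb)))
      atTop (𝓝 1))
    (hfp_lim' : Tendsto (fun x : ℝ => deriv fp x * Complex.exp (-(Complex.I * E * x / hb)))
      atTop (𝓝 (Complex.I * E / hb)))
    (hfm_lim : Tendsto (fun x : ℝ => fm x * Complex.exp (Complex.I * E * x / hb))
      atBot (𝓝 1))
    (hfm_lim' : Tendsto (fun x : ℝ => deriv fm x * Complex.exp (Complex.I * E * x / hb))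
      atBot (𝓝 (-(Complex.I * E / hb)))) :
    ∀ x : ℝ,
      2 * |E| / hb ≤ ‖fm x * deriv fp x - deriv fm x * fp x‖ ∧
      fm x * deriv fp x - deriv fm x * fp x ≠ 0 := by
  intro x
  set k : ℂ := Complex.I * E / hb
  have hk : conj k = -k := by simp [k, Complex.conj_ofReal, neg_div]
  have hm : conjWronskian fm x = 2 * k := by
    rw [conjWronskian_eq_of_tendsto hfm_smooth (deriv_deriv_eq_of_schrodinger hhb.ne' hfm_ode)
      (fun y => by simp [Complex.norm_exp]) hfm_lim hfm_lim' x, map_neg, hk]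
    ring
  have hp : conjWronskian fp x = -(2 * k) := by
    rw [conjWronskian_eq_of_tendsto hfp_smooth (deriv_deriv_eq_of_schrodinger hhb.ne' hfp_ode)
      (fun y => by simp [Complex.norm_exp]) hfp_lim hfp_lim' x, hk]
    ring
  have hkk : 2 * k * -(2 * k) = ((2 * |E| / hb) ^ 2 : ℝ) := by
    rw [div_pow, mul_pow, sq_abs]
    push_cast [k]
    linear_combination (-4 * (E : ℂ) ^ 2 / (hb : ℂ) ^ 2) * Complex.I_sq
  have hplucker := normSq_wronskian (fm x) (deriv fm x) (fp x) (deriv fp x)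
  rw [← conjWronskian, ← conjWronskian, hm, hp, hkk] at hplucker
  have hsq : (2 * |E| / hb) ^ 2 ≤ ‖fm x * deriv fp x - deriv fm x * fp x‖ ^ 2 := by
    rw [Complex.sq_norm, (by exact_mod_cast hplucker : Complex.normSq _ = _)]
    exact le_add_of_nonneg_right (Complex.normSq_nonneg _)
  have hbound : 2 * |E| / hb ≤ ‖fm x * deriv fp x - deriv fm x * fp x‖ :=
    (pow_le_pow_iff_left₀ (by positivity) (norm_nonneg _) two_ne_zero).mp hsq
  exact ⟨hbound, norm_pos_iff.mp (lt_of_lt_of_le (by positivity) hbound)⟩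

/-- For `V ∈ L¹(ℝ)` real-valued, `ħ > 0`, `E ≠ 0`, and Jost solutions
`f₊, f₋` of `−ħ² f'' + V f = E² f` (characterized by their asymptotics at `±∞`),
the Wronskian `W(f₋, f₊) = f₋ f₊' − f₋' f₊` satisfies `|W| ≥ 2|E|/ħ`; in particular
it is nonvanishing, i.e. `{f₋, f₊}` is a fundamental system. -/
theorem jost_wronskian_lower_bound
    (V : ℝ → ℝ) (hV : Integrable V)
    (hb E : ℝ) (hhb : 0 < hb) (hE : E ≠ 0)
    (fp fm : ℝ → ℂ)
    (hfp_smooth : ContDiff ℝ 2 fp) (hfm_smooth : ContDiff ℝ 2 fm)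
    (hfp_ode : ∀ x : ℝ,
      -(hb:ℂ)^2 * deriv (deriv fp) x + (V x : ℂ) * fp x = (E:ℂ)^2 * fp x)
    (hfm_ode : ∀ x : ℝ,
      -(hb:ℂ)^2 * deriv (deriv fm) x + (V x : ℂ) * fm x = (E:ℂ)^2 * fm x)
    (hfp_lim : Tendsto (fun x : ℝ => fp x * Complex.exp (-(Complex.I * E * x / hb)))
      atTop (𝓝 1))
    (hfp_lim' : Tendsto (fun x : ℝ => deriv fp x * Complex.exp (-(Complex.I * E * x / hb)))
      atTop (𝓝 (Complex.I * E / hb)))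
    (hfm_lim : Tendsto (fun x : ℝ => fm x * Complex.exp (Complex.I * E * x / hb))
      atBot (𝓝 1))
    (hfm_lim' : Tendsto (fun x : ℝ => deriv fm x * Complex.exp (Complex.I * E * x / hb))
      atBot (𝓝 (-(Complex.I * E / hb)))) :
    ∀ x : ℝ,
      2 * |E| / hb ≤ ‖fm x * deriv fp x - deriv fm x * fp x‖ ∧
      fm x * deriv fp x - deriv fm x * fp x ≠ 0 :=
  jost_wronskian_lower_bound_general V hb E hhb hE fp fm hfp_smooth hfm_smooth hfp_ode hfm_ode
    hfp_lim hfp_lim' hfm_lim hfm_lim'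
end

section
/- Let 0 < ħ ≪ 1 and 0 < E ≤ ν₀ħ/2 for a fixed ν₀ > 0, set ν := 2E/ħ and α := √(ħ²/4+4E²). Then the semiclassical Jost solution of −ħ² f'' + V(·;ħ) f = E² f satisfies, for all x > x₀, f₊(x,E;ħ) = 2^{−1/2+iν} ħ^{1/2−iν} e^{x/4} (∂_zφ((2/α)e^{−x/2}, α²;ħ))^{−1/2} ǧ₋(φ((2/α)e^{−x/2}, α²;ħ), E;ħ), where ǧ₋(·,E;ħ) is the solution of the normal form equation with ǧ₋(w,E;ħ) = B₋(αw/ħ,ν)[1+ħ²č₋(w,E;ħ)] near w = 0 (so that ǧ₋(w,E;ħ)/(ħ^{−1/2+iν}(αw)^{1/2−iν}) → 1 as w → 0+). -/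
/-!
The function `F(x) = e^{x/4} (∂_zφ(z))^{-1/2} ǧ₋(φ(z))`, `z = (2/α) e^{-x/2}`, solves the
original equation, and since `φ(z) ~ z`, `∂_zφ(z) → 1` as `z → 0+` and
`ǧ₋(w) ~ ħ^{-1/2+iν} (αw)^{1/2-iν}`, one gets `F(x) e^{-iEx/ħ} → 2^{1/2-iν} ħ^{-1/2+iν}`
as `x → ∞`. The potential is real, so `f₊` and its conjugate are solutions with Wronskian
`-2iE/ħ ≠ 0`, and `F = A f₊ + B f̄₊`. Along `x → ∞` the term `B f̄₊ e^{-iEx/ħ}` behaves like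
`B e^{-2iEx/ħ}`, which converges only if `B = 0`; hence `F = 2^{1/2-iν} ħ^{-1/2+iν} f₊`.
-/

open Set Filter Topology

noncomputable def alf (hb E : ℝ) : ℝ := Real.sqrt (hb^2/4 + 4*E^2)

noncomputable section

def SolvesSchrodingerOn (ħ E : ℝ) (V : ℝ → ℝ) (s : Set ℝ) (u : ℝ → ℂ) : Prop :=
  ∀ x ∈ s, -(ħ : ℂ) ^ 2 * deriv (deriv u) x + ((V x : ℝ) - (E : ℂ) ^ 2) * u x = 0

def wronskian (u v : ℝ → ℂ) (x : ℝ) : ℂ := u x * deriv v x - deriv u x * v x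

theorem wronskian_mul_add_wronskian_mul (u v F : ℝ → ℂ) (x : ℝ) :
    wronskian F v x * u x + wronskian u F x * v x = wronskian u v x * F x := by
  simp only [wronskian]; ring

theorem hasDerivAt_wronskian {u v : ℝ → ℂ} {x : ℝ} (hu : DifferentiableAt ℝ u x)
    (hu' : DifferentiableAt ℝ (deriv u) x) (hv : DifferentiableAt ℝ v x)
    (hv' : DifferentiableAt ℝ (deriv v) x) :
    HasDerivAt (wronskian u v) (u x * deriv (deriv v) x - deriv (deriv u) x * v x) x :=
  ((hu.hasDerivAt.mul hv'.hasDerivAt).sub (hu'.hasDerivAt.mul hv.hasDerivAt)).congr_deriv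
    (by ring)

theorem ContDiffOn.star {s : Set ℝ} {n : WithTop ℕ∞} {u : ℝ → ℂ}
    (hu : ContDiffOn ℝ n u s) : ContDiffOn ℝ n (fun x => star (u x)) s :=
  Complex.conjCLE.contDiff.comp_contDiffOn hu

theorem ContDiffOn.differentiableOn_deriv_of_isOpen {𝕜 F : Type*} [NontriviallyNormedField 𝕜]
    [NormedAddCommGroup F] [NormedSpace 𝕜 F] {s : Set 𝕜} {u : 𝕜 → F}
    (hu : ContDiffOn 𝕜 2 u s) (hs : IsOpen s) : DifferentiableOn 𝕜 (deriv u) s :=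
  (hu.deriv_of_isOpen hs (by norm_num : (1 : WithTop ℕ∞) + 1 ≤ 2)).differentiableOn one_ne_zero

namespace SolvesSchrodingerOn

variable {ħ E : ℝ} {V : ℝ → ℝ} {s : Set ℝ} {u v F : ℝ → ℂ}

theorem star (hu : SolvesSchrodingerOn ħ E V s u) :
    SolvesSchrodingerOn ħ E V s (fun x => Star.star (u x)) := by
  intro x hx
  have h := congrArg (starRingEnd ℂ) (hu x hx)
  simp only [map_add, map_mul, map_neg, map_pow, map_sub, map_zero, Complex.conj_ofReal] at h
  simp only [deriv.star']
  simpa only [Complex.star_def] using h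

theorem wronskian_eq (hħ : ħ ≠ 0) (hs : IsOpen s) (hs' : IsPreconnected s)
    (hu : ContDiffOn ℝ 2 u s) (hv : ContDiffOn ℝ 2 v s)
    (hu_sol : SolvesSchrodingerOn ħ E V s u) (hv_sol : SolvesSchrodingerOn ħ E V s v)
    {x y : ℝ} (hx : x ∈ s) (hy : y ∈ s) : wronskian u v x = wronskian u v y := by
  have hW : ∀ t ∈ s, HasDerivAt (wronskian u v) 0 t := by
    intro t ht
    have hnhds := hs.mem_nhds ht
    convert hasDerivAt_wronskian
      ((hu.differentiableOn two_ne_zero).differentiableAt hnhds)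
      ((hu.differentiableOn_deriv_of_isOpen hs).differentiableAt hnhds)
      ((hv.differentiableOn two_ne_zero).differentiableAt hnhds)
      ((hv.differentiableOn_deriv_of_isOpen hs).differentiableAt hnhds) using 1
    have hħ2 : (ħ : ℂ) ^ 2 ≠ 0 := pow_ne_zero _ (Complex.ofReal_ne_zero.mpr hħ)
    refine (mul_eq_zero.mp ?_).resolve_left hħ2 |>.symm
    linear_combination v t * hu_sol t ht - u t * hv_sol t ht
  exact hs.is_const_of_deriv_eq_zero hs'
    (fun t ht => (hW t ht).differentiableAt.differentiableWithinAt) (fun t ht => (hW t ht).deriv)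
    hx hy

theorem exists_eqOn_linear_combination (hħ : ħ ≠ 0) (hs : IsOpen s) (hs' : IsPreconnected s)
    (hu : ContDiffOn ℝ 2 u s) (hv : ContDiffOn ℝ 2 v s) (hF : ContDiffOn ℝ 2 F s)
    (hu_sol : SolvesSchrodingerOn ħ E V s u) (hv_sol : SolvesSchrodingerOn ħ E V s v)
    (hF_sol : SolvesSchrodingerOn ħ E V s F) {x₁ : ℝ} (hx₁ : x₁ ∈ s)
    (hW : wronskian u v x₁ ≠ 0) :
    ∃ A B : ℂ, ∀ x ∈ s, F x = A * u x + B * v x := by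
  refine ⟨wronskian F v x₁ / wronskian u v x₁, wronskian u F x₁ / wronskian u v x₁,
    fun x hx => ?_⟩
  have huv := hu_sol.wronskian_eq hħ hs hs' hu hv hv_sol hx₁ hx
  rw [hF_sol.wronskian_eq hħ hs hs' hF hv hv_sol hx₁ hx,
    hu_sol.wronskian_eq hħ hs hs' hu hF hF_sol hx₁ hx, huv]
  rw [huv] at hW
  field_simp
  linear_combination -(wronskian_mul_add_wronskian_mul u v F x)

end SolvesSchrodingerOn

theorem eq_zero_of_tendsto_mul_exp_mul_I {θ : ℝ} (hθ : θ ≠ 0) {B L : ℂ}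
    (h : Tendsto (fun x : ℝ => B * Complex.exp (θ * x * Complex.I)) atTop (𝓝 L)) : B = 0 := by
  have hshift : Tendsto (fun x : ℝ => -(B * Complex.exp (θ * x * Complex.I))) atTop (𝓝 L) := by
    refine (h.comp (tendsto_atTop_add_const_right _ (Real.pi / θ) tendsto_id)).congr fun x => ?_
    have : (θ : ℂ) * ((x + Real.pi / θ : ℝ) : ℂ) * Complex.I
        = θ * x * Complex.I + Real.pi * Complex.I := by
      push_cast; field_simp [Complex.ofReal_ne_zero.mpr hθ]
    simp only [Function.comp_apply, id, this, Complex.exp_add, Complex.exp_pi_mul_I]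
    ring
  have hL : L = 0 := by
    have := tendsto_nhds_unique hshift h.neg
    linear_combination this / 2
  have hnorm := h.norm
  simp only [norm_mul, ← Complex.ofReal_mul, Complex.norm_exp_ofReal_mul_I, mul_one, hL,
    norm_zero] at hnorm
  exact norm_eq_zero.mp (tendsto_nhds_unique tendsto_const_nhds hnorm)

theorem star_exp_phase_mul_self (E ħ x : ℝ) :
    star (Complex.exp (-(Complex.I * E * x / ħ))) * Complex.exp (-(Complex.I * E * x / ħ)) = 1 := by
  rw [Complex.star_def, ← Complex.exp_conj, ← Complex.exp_add]
  simp only [map_neg, map_div₀, map_mul, Complex.conj_I, Complex.conj_ofReal]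
  ring_nf
  exact Complex.exp_zero

theorem tendsto_wronskian_star {ħ E : ℝ} {f : ℝ → ℂ}
    (hf : Tendsto (fun x : ℝ => f x * Complex.exp (-(Complex.I * E * x / ħ))) atTop (𝓝 1))
    (hf' : Tendsto (fun x : ℝ => deriv f x * Complex.exp (-(Complex.I * E * x / ħ))) atTop
      (𝓝 (Complex.I * E / ħ))) :
    Tendsto (wronskian f fun x => star (f x)) atTop (𝓝 (-2 * Complex.I * E / ħ)) := by
  have hlim := (hf.mul (hf'.star)).sub (hf'.mul hf.star)
  convert hlim using 1
  · ext x
    simp only [wronskian, deriv.star', star_mul']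
    linear_combination (deriv f x * star (f x) - f x * star (deriv f x)) *
      star_exp_phase_mul_self E ħ x
  · simp only [star_one, star_div₀, star_mul', Complex.star_def, Complex.conj_I,
      Complex.conj_ofReal]
    ring_nf

theorem wronskian_star_eq_of_tendsto {ħ E a : ℝ} {V : ℝ → ℝ} {f : ℝ → ℂ}
    (hħ : ħ ≠ 0) (hf : ContDiffOn ℝ 2 f (Ioi a)) (hf_sol : SolvesSchrodingerOn ħ E V (Ioi a) f)
    (hf_lim : Tendsto (fun x : ℝ => f x * Complex.exp (-(Complex.I * E * x / ħ))) atTop (𝓝 1))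
    (hf_lim' : Tendsto (fun x : ℝ => deriv f x * Complex.exp (-(Complex.I * E * x / ħ))) atTop
      (𝓝 (Complex.I * E / ħ))) {x : ℝ} (hx : x ∈ Ioi a) :
    wronskian f (fun x => star (f x)) x = -2 * Complex.I * E / ħ := by
  refine tendsto_nhds_unique (tendsto_const_nhds.congr' ?_) (tendsto_wronskian_star hf_lim hf_lim')
  filter_upwards [eventually_gt_atTop a] with y hy
  exact hf_sol.wronskian_eq hħ isOpen_Ioi isPreconnected_Ioi hf hf.star hf_sol.star hx hy

theorem eq_mul_jost_of_tendsto_mul_exp {ħ E a : ℝ} {V : ℝ → ℝ} {f F : ℝ → ℂ} {c : ℂ}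
    (hħ : ħ ≠ 0) (hE : E ≠ 0)
    (hf : ContDiffOn ℝ 2 f (Ioi a)) (hf_sol : SolvesSchrodingerOn ħ E V (Ioi a) f)
    (hf_lim : Tendsto (fun x : ℝ => f x * Complex.exp (-(Complex.I * E * x / ħ))) atTop (𝓝 1))
    (hf_lim' : Tendsto (fun x : ℝ => deriv f x * Complex.exp (-(Complex.I * E * x / ħ))) atTop
      (𝓝 (Complex.I * E / ħ)))
    (hF : ContDiffOn ℝ 2 F (Ioi a)) (hF_sol : SolvesSchrodingerOn ħ E V (Ioi a) F)
    (hF_lim : Tendsto (fun x : ℝ => F x * Complex.exp (-(Complex.I * E * x / ħ))) atTop (𝓝 c)) :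
    ∀ x ∈ Ioi a, F x = c * f x := by
  have ha : a + 1 ∈ Ioi a := lt_add_one a
  have hW_ne : wronskian f (fun x => star (f x)) (a + 1) ≠ 0 := by
    rw [wronskian_star_eq_of_tendsto hħ hf hf_sol hf_lim hf_lim' ha]
    simp [hE, hħ, Complex.I_ne_zero]
  obtain ⟨A, B, hAB⟩ := hf_sol.exists_eqOn_linear_combination hħ isOpen_Ioi isPreconnected_Ioi
    hf hf.star hF hf_sol.star hF_sol ha hW_ne
  have hstar_lim : Tendsto (fun x : ℝ => star (f x * Complex.exp (-(Complex.I * E * x / ħ))))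
      atTop (𝓝 1) := by
    simpa using hf_lim.star
  -- the `star f` component picks up the phase `e²`, which has no limit unless `B = 0`
  have hB_lim : Tendsto (fun x : ℝ => B * Complex.exp ((-2 * E / ħ : ℝ) * x * Complex.I)) atTop
      (𝓝 (c - A)) := by
    have h := ((hF_lim.sub (hf_lim.const_mul A)).div hstar_lim one_ne_zero)
    rw [mul_one, div_one] at h
    refine h.congr' ?_
    filter_upwards [eventually_gt_atTop a, hstar_lim.eventually_ne one_ne_zero] with x hx hx'
    rw [Pi.div_apply, div_eq_iff hx', hAB x hx]
    have hexp : Complex.exp ((-2 * E / ħ : ℝ) * x * Complex.I)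
        = Complex.exp (-(Complex.I * E * x / ħ)) * Complex.exp (-(Complex.I * E * x / ħ)) := by
      rw [← Complex.exp_add]; push_cast; ring_nf
    rw [hexp, star_mul']
    linear_combination -(B * star (f x) * Complex.exp (-(Complex.I * E * x / ħ))) *
      star_exp_phase_mul_self E ħ x
  have hB : B = 0 := eq_zero_of_tendsto_mul_exp_mul_I
    (by simp [hE, hħ] : (-2 * E / ħ : ℝ) ≠ 0) hB_lim
  have hA : A = c := by
    have h := hf_lim.const_mul A
    rw [mul_one] at h
    refine tendsto_nhds_unique (h.congr' ?_) hF_lim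
    filter_upwards [eventually_gt_atTop a] with x hx
    rw [hAB x hx, hB]; ring
  intro x hx
  rw [hAB x hx, hA, hB, zero_mul, add_zero]

theorem Complex.ofReal_exp_cpow (r : ℝ) (s : ℂ) :
    ((Real.exp r : ℝ) : ℂ) ^ s = Complex.exp (r * s) := by
  rw [Complex.cpow_def_of_ne_zero (Complex.ofReal_ne_zero.mpr (Real.exp_pos r).ne'),
    ← Complex.ofReal_log (Real.exp_pos r).le, Real.log_exp]

def lgCoord (α x : ℝ) : ℝ := 2 / α * Real.exp (-x / 2)

/-- Inverse of the Liouville–Green transform `f ↦ g` relating the two equations. -/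
def lgPullback (α : ℝ) (φ : ℝ → ℝ) (g : ℝ → ℂ) (x : ℝ) : ℂ :=
  ((Real.exp (x / 4) * (Real.sqrt (deriv φ (lgCoord α x)))⁻¹ : ℝ) : ℂ) * g (φ (lgCoord α x))

section LiouvilleGreen

variable {α : ℝ} {φ : ℝ → ℝ} {g : ℝ → ℂ}

theorem lgCoord_pos (hα : 0 < α) (x : ℝ) : 0 < lgCoord α x := by
  unfold lgCoord; positivity

theorem contDiff_lgCoord (α : ℝ) {n : WithTop ℕ∞} : ContDiff ℝ n (lgCoord α) :=
  contDiff_const.mul (Real.contDiff_exp.comp (contDiff_id.neg.div_const 2))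

theorem mapsTo_lgCoord (hα : 0 < α) (x₀ : ℝ) :
    MapsTo (lgCoord α) (Ioi x₀) (Ioo 0 (2 * Real.exp (-x₀ / 2) / α)) := by
  intro x hx
  refine ⟨lgCoord_pos hα x, ?_⟩
  have : Real.exp (-x / 2) < Real.exp (-x₀ / 2) := Real.exp_lt_exp.mpr (by linarith [mem_Ioi.mp hx])
  rw [lgCoord, div_mul_eq_mul_div]
  gcongr

theorem tendsto_lgCoord_atTop (hα : 0 < α) : Tendsto (lgCoord α) atTop (𝓝[>] 0) := by
  refine tendsto_nhdsWithin_iff.mpr ⟨?_, Eventually.of_forall (lgCoord_pos hα)⟩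
  have h : Tendsto (fun x : ℝ => -x / 2) atTop atBot :=
    tendsto_neg_atTop_atBot.atBot_div_const two_pos
  have := (Real.tendsto_exp_atBot.comp h).const_mul (2 / α)
  rwa [mul_zero] at this

theorem contDiffOn_lgPullback {U W s : Set ℝ} (hU : IsOpen U) (hW : IsOpen W)
    (hφ : ContDiffOn ℝ 3 φ U) (hφ' : ∀ z ∈ U, 0 < deriv φ z) (hφUW : MapsTo φ U W)
    (hg : ContDiffOn ℝ 2 g W) (hs : MapsTo (lgCoord α) s U) :
    ContDiffOn ℝ 2 (lgPullback α φ g) s := by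
  intro x hx
  have hz : U ∈ 𝓝 (lgCoord α x) := hU.mem_nhds (hs hx)
  have hφz : ContDiffAt ℝ 2 (fun y => φ (lgCoord α y)) x :=
    ((hφ.contDiffAt hz).of_le (by norm_num)).comp x (contDiff_lgCoord α).contDiffAt
  have hdφz : ContDiffAt ℝ 2 (fun y => deriv φ (lgCoord α y)) x :=
    ((hφ.deriv_of_isOpen hU (by norm_num)).contDiffAt hz).comp x (contDiff_lgCoord α).contDiffAt
  have hamp : ContDiffAt ℝ 2
      (fun y => Real.exp (y / 4) * (Real.sqrt (deriv φ (lgCoord α y)))⁻¹) x :=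
    (Real.contDiff_exp.comp (contDiff_id.div_const 4)).contDiffAt.mul
      (((Real.contDiffAt_sqrt (hφ' _ (hs hx)).ne').comp x hdφz).inv
        (Real.sqrt_pos.mpr (hφ' _ (hs hx))).ne')
  exact ((Complex.ofRealCLM.contDiff.contDiffAt.comp x hamp).mul
    ((hg.contDiffAt (hW.mem_nhds (hφUW (hs hx)))).comp x hφz)).contDiffWithinAt

theorem apply_eq_mul_lgPullback {x : ℝ} (hφ' : 0 < deriv φ (lgCoord α x)) :
    g (φ (lgCoord α x))
      = ((Real.exp (-x / 4) * Real.sqrt (deriv φ (lgCoord α x)) : ℝ) : ℂ) * lgPullback α φ g x := by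
  have hsqrt : Real.sqrt (deriv φ (lgCoord α x)) ≠ 0 := (Real.sqrt_pos.mpr hφ').ne'
  have hamp : (Real.exp (-x / 4) * Real.sqrt (deriv φ (lgCoord α x))) *
      (Real.exp (x / 4) * (Real.sqrt (deriv φ (lgCoord α x)))⁻¹) = 1 := by
    rw [mul_mul_mul_comm, ← Real.exp_add]
    field_simp
    norm_num
  rw [lgPullback, ← mul_assoc, ← Complex.ofReal_mul, hamp, Complex.ofReal_one, one_mul]

theorem lgPullback_mul_exp_eq {ħ E x : ℝ} (hα : 0 < α) (hħ : ħ ≠ 0)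
    (hw : 0 < φ (lgCoord α x)) :
    lgPullback α φ g x * Complex.exp (-(Complex.I * E * x / ħ))
      = (2 : ℂ) ^ ((1 : ℂ) / 2 - Complex.I * (2 * E / ħ : ℝ))
        * (ħ : ℂ) ^ (-(1 : ℂ) / 2 + Complex.I * (2 * E / ħ : ℝ))
        * (((Real.sqrt (deriv φ (lgCoord α x)))⁻¹ : ℝ) : ℂ)
        * ((φ (lgCoord α x) / lgCoord α x : ℝ) : ℂ) ^ ((1 : ℂ) / 2 - Complex.I * (2 * E / ħ : ℝ))
        * (g (φ (lgCoord α x)) / ((ħ : ℂ) ^ (-(1 : ℂ) / 2 + Complex.I * (2 * E / ħ : ℝ))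
          * ((α * φ (lgCoord α x) : ℝ) : ℂ) ^ ((1 : ℂ) / 2 - Complex.I * (2 * E / ħ : ℝ)))) := by
  set s : ℂ := (1 : ℂ) / 2 - Complex.I * (2 * E / ħ : ℝ) with hs
  set z := lgCoord α x with hz
  set w := φ z
  have hz_pos : 0 < z := lgCoord_pos hα x
  have hħs : (ħ : ℂ) ^ (-(1 : ℂ) / 2 + Complex.I * (2 * E / ħ : ℝ)) ≠ 0 := by
    simp [hħ]
  have hαw : ((α * w : ℝ) : ℂ) ^ s ≠ 0 := by
    simp [hα.ne', hw.ne']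
  have hsplit : ((α * w : ℝ) : ℂ) ^ s
      = (2 : ℂ) ^ s * Complex.exp ((-x / 2 : ℝ) * s) * ((w / z : ℝ) : ℂ) ^ s := by
    have hαw : α * w = (2 * Real.exp (-x / 2)) * (w / z) := by
      rw [hz, lgCoord]; field_simp
    rw [hαw, Complex.ofReal_mul, Complex.mul_cpow_ofReal_nonneg (by positivity) (by positivity),
      Complex.ofReal_mul, Complex.mul_cpow_ofReal_nonneg (by norm_num) (by positivity),
      Complex.ofReal_exp_cpow, Complex.ofReal_ofNat]
  have hphase : ((Real.exp (x / 4) : ℝ) : ℂ) * Complex.exp ((-x / 2 : ℝ) * s) *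
      Complex.exp (-(Complex.I * E * x / ħ)) = 1 := by
    rw [Complex.ofReal_exp, ← Complex.exp_add, ← Complex.exp_add, hs]
    push_cast
    ring_nf
    exact Complex.exp_zero
  rw [lgPullback, ← hz, mul_div_assoc', eq_div_iff (mul_ne_zero hħs hαw), hsplit,
    Complex.ofReal_mul]
  linear_combination ((2 : ℂ) ^ s * (ħ : ℂ) ^ (-(1 : ℂ) / 2 + Complex.I * (2 * E / ħ : ℝ)) *
    (((Real.sqrt (deriv φ z))⁻¹ : ℝ) : ℂ) * ((w / z : ℝ) : ℂ) ^ s * g w) * hphase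

theorem tendsto_lgPullback_mul_exp {ħ E : ℝ} (hα : 0 < α) (hħ : ħ ≠ 0)
    (hφ0 : Tendsto (fun z => φ z / z) (𝓝[>] 0) (𝓝 1))
    (hφ0' : Tendsto (fun z => deriv φ z) (𝓝[>] 0) (𝓝 1))
    (hg : Tendsto (fun w : ℝ =>
        g w / ((ħ : ℂ) ^ (-(1 : ℂ) / 2 + Complex.I * (2 * E / ħ : ℝ)) *
          ((α * w : ℝ) : ℂ) ^ ((1 : ℂ) / 2 - Complex.I * (2 * E / ħ : ℝ))))
      (𝓝[>] 0) (𝓝 1)) :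
    Tendsto (fun x : ℝ => lgPullback α φ g x * Complex.exp (-(Complex.I * E * x / ħ))) atTop
      (𝓝 ((2 : ℂ) ^ ((1 : ℂ) / 2 - Complex.I * (2 * E / ħ : ℝ))
        * (ħ : ℂ) ^ (-(1 : ℂ) / 2 + Complex.I * (2 * E / ħ : ℝ)))) := by
  have hz := tendsto_lgCoord_atTop hα
  have hratio : Tendsto (fun x => φ (lgCoord α x) / lgCoord α x) atTop (𝓝 1) := hφ0.comp hz
  have hw_pos : ∀ᶠ x in atTop, 0 < φ (lgCoord α x) := by
    filter_upwards [hratio.eventually (eventually_gt_nhds one_pos)] with x hx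
    exact (div_pos_iff_of_pos_right (lgCoord_pos hα x)).mp hx
  have hw : Tendsto (fun x => φ (lgCoord α x)) atTop (𝓝[>] 0) := by
    refine tendsto_nhdsWithin_iff.mpr ⟨?_, hw_pos⟩
    have h := hratio.mul (tendsto_nhdsWithin_iff.mp hz).1
    rw [one_mul] at h
    exact h.congr fun x => div_mul_cancel₀ _ (lgCoord_pos hα x).ne'
  have hamp : Tendsto (fun x => (((Real.sqrt (deriv φ (lgCoord α x)))⁻¹ : ℝ) : ℂ)) atTop
      (𝓝 1) := by
    have h := (Real.continuous_sqrt.tendsto 1).comp (hφ0'.comp hz)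
    rw [Real.sqrt_one] at h
    have h' := h.inv₀ one_ne_zero
    rw [inv_one] at h'
    have h'' := (Complex.continuous_ofReal.tendsto 1).comp h'
    rwa [Complex.ofReal_one] at h''
  have hpow : Tendsto (fun x => ((φ (lgCoord α x) / lgCoord α x : ℝ) : ℂ) ^
      ((1 : ℂ) / 2 - Complex.I * (2 * E / ħ : ℝ))) atTop (𝓝 1) := by
    have h := (Complex.continuous_ofReal.tendsto 1).comp hratio
    rw [Complex.ofReal_one] at h
    have h' := (continuousAt_cpow_const (b := (1 : ℂ) / 2 - Complex.I * (2 * E / ħ : ℝ))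
      Complex.one_mem_slitPlane).tendsto.comp h
    rwa [Complex.one_cpow] at h'
  have h := (((tendsto_const_nhds (x := (2 : ℂ) ^ ((1 : ℂ) / 2 - Complex.I * (2 * E / ħ : ℝ))
    * (ħ : ℂ) ^ (-(1 : ℂ) / 2 + Complex.I * (2 * E / ħ : ℝ)))).mul hamp).mul hpow).mul (hg.comp hw)
  rw [mul_one, mul_one, mul_one] at h
  refine h.congr' ?_
  filter_upwards [hw_pos] with x hx
  exact (lgPullback_mul_exp_eq hα hħ hx).symm

end LiouvilleGreen

end

theorem jost_solution_small_nu_representation_general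
    (x₀ hb₀ ν₀ : ℝ)
    (ε : ℝ → ℝ → ℝ)
    -- fixed semiclassical parameters with 0 < ν = 2E/ħ ≤ ν₀
    (E hb : ℝ) (hhb : hb ∈ Ioo (0:ℝ) hb₀) (hE : E ∈ Ioc (0:ℝ) (ν₀*hb/2))
    -- the Liouville–Green diffeomorphism φ of (0, α⁻¹y₀) onto (0, w₀)
    (φ : ℝ → ℝ) (w₀ : ℝ)
    (hφ_smooth : ContDiffOn ℝ (⊤ : ℕ∞) φ
      (Ioo 0 ((2*Real.exp (-x₀/2)) / alf hb E)))
    (hφ_bij : BijOn φ (Ioo 0 ((2*Real.exp (-x₀/2)) / alf hb E)) (Ioo 0 w₀))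
    (hφ_pos : ∀ z ∈ Ioo (0:ℝ) ((2*Real.exp (-x₀/2)) / alf hb E), 0 < deriv φ z)
    (hφ0 : Tendsto (fun z => φ z / z) (𝓝[>] 0) (𝓝 1))
    (hφ0' : Tendsto (fun z => deriv φ z) (𝓝[>] 0) (𝓝 1))
    -- the normal form equation: −(ħ/α)²g'' + (1−1/w²)g = ħ²V₁ g, obtained from the
    -- original equation through the Liouville–Green transform induced by φ
    (V₁ : ℝ → ℝ)
    (hEquiv : ∀ f g : ℝ → ℂ,
      ContDiffOn ℝ 2 f (Ioi x₀) → ContDiffOn ℝ 2 g (Ioo 0 w₀) →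
      (∀ x ∈ Ioi x₀,
        g (φ ((2/alf hb E)*Real.exp (-x/2)))
          = ((Real.exp (-x/4) *
              Real.sqrt (deriv φ ((2/alf hb E)*Real.exp (-x/2))) : ℝ) : ℂ) * f x) →
      ((∀ w ∈ Ioo (0:ℝ) w₀,
          -((hb/alf hb E : ℝ) : ℂ)^2 * deriv (deriv g) w
              + ((1 - 1/w^2 : ℝ) : ℂ) * g w = ((hb^2 * V₁ w : ℝ) : ℂ) * g w) ↔
        (∀ x ∈ Ioi x₀,
          -(hb:ℂ)^2 * deriv (deriv f) x +
            ((Real.exp (-x) * (1 + ε (Real.exp (-x)) hb) : ℝ) - (E:ℂ)^2) * f x = 0)))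
    -- ǧ₋ : the solution of the normal form equation of the oscillatory form near 0
    (gm : ℝ → ℂ)
    (hg_smooth : ContDiffOn ℝ 2 gm (Ioo 0 w₀))
    (hg_ode : ∀ w ∈ Ioo (0:ℝ) w₀,
      -((hb/alf hb E : ℝ) : ℂ)^2 * deriv (deriv gm) w
          + ((1 - 1/w^2 : ℝ) : ℂ) * gm w = ((hb^2 * V₁ w : ℝ) : ℂ) * gm w)
    (hg_asym : Tendsto (fun w : ℝ =>
        gm w / ((hb:ℂ) ^ (-(1:ℂ)/2 + Complex.I * (2*E/hb : ℝ)) *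
          ((alf hb E * w : ℝ) : ℂ) ^ ((1:ℂ)/2 - Complex.I * (2*E/hb : ℝ))))
      (𝓝[>] 0) (𝓝 1))
    -- f : the outgoing Jost solution of −ħ²f'' + Vf = E²f on (x₀,∞)
    (f : ℝ → ℂ)
    (hf_smooth : ContDiffOn ℝ 2 f (Ioi x₀))
    (hf_ode : ∀ x ∈ Ioi x₀,
      -(hb:ℂ)^2 * deriv (deriv f) x +
        ((Real.exp (-x) * (1 + ε (Real.exp (-x)) hb) : ℝ) - (E:ℂ)^2) * f x = 0)
    (hf_lim : Tendsto (fun x : ℝ => f x * Complex.exp (-(Complex.I * E * x / hb)))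
      atTop (𝓝 1))
    (hf_lim' : Tendsto (fun x : ℝ => deriv f x * Complex.exp (-(Complex.I * E * x / hb)))
      atTop (𝓝 (Complex.I * E / hb))) :
    ∀ x ∈ Ioi x₀,
      f x = (2:ℂ) ^ (-(1:ℂ)/2 + Complex.I * (2*E/hb : ℝ))
        * (hb:ℂ) ^ ((1:ℂ)/2 - Complex.I * (2*E/hb : ℝ))
        * ((Real.exp (x/4) *
            (Real.sqrt (deriv φ ((2/alf hb E)*Real.exp (-x/2))))⁻¹ : ℝ) : ℂ)
        * gm (φ ((2/alf hb E)*Real.exp (-x/2))) := by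
  intro x hx
  obtain ⟨hb_pos, -⟩ := hhb
  obtain ⟨hE_pos, -⟩ := hE
  have hα : 0 < alf hb E := Real.sqrt_pos.mpr (by positivity)
  have hcoord := mapsTo_lgCoord hα x₀
  have hF : ContDiffOn ℝ 2 (lgPullback (alf hb E) φ gm) (Ioi x₀) :=
    contDiffOn_lgPullback isOpen_Ioo isOpen_Ioo (hφ_smooth.of_le (WithTop.coe_le_coe.mpr le_top))
      hφ_pos hφ_bij.mapsTo hg_smooth hcoord
  have hF_sol : SolvesSchrodingerOn hb E (fun x => Real.exp (-x) * (1 + ε (Real.exp (-x)) hb))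
      (Ioi x₀) (lgPullback (alf hb E) φ gm) :=
    (hEquiv _ gm hF hg_smooth fun y hy => apply_eq_mul_lgPullback (hφ_pos _ (hcoord hy))).mp hg_ode
  have hF_eq := eq_mul_jost_of_tendsto_mul_exp hb_pos.ne' hE_pos.ne' hf_smooth hf_ode hf_lim
    hf_lim' hF hF_sol (tendsto_lgPullback_mul_exp hα hb_pos.ne' hφ0 hφ0' hg_asym) x hx
  set s : ℂ := (1 : ℂ) / 2 - Complex.I * (2 * E / hb : ℝ)
  set s' : ℂ := -(1 : ℂ) / 2 + Complex.I * (2 * E / hb : ℝ)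
  have hss' : s' + s = 0 := by ring
  have h2 : (2 : ℂ) ^ s' * (2 : ℂ) ^ s = 1 := by
    rw [← Complex.cpow_add _ _ two_ne_zero, hss', Complex.cpow_zero]
  have hħ : (hb : ℂ) ^ s * (hb : ℂ) ^ s' = 1 := by
    rw [← Complex.cpow_add _ _ (Complex.ofReal_ne_zero.mpr hb_pos.ne'), add_comm, hss',
      Complex.cpow_zero]
  rw [mul_assoc _ _ (gm _)]
  change f x = (2 : ℂ) ^ s' * (hb : ℂ) ^ s * lgPullback (alf hb E) φ gm x
  rw [hF_eq]
  linear_combination -(f x * (hb : ℂ) ^ s * (hb : ℂ) ^ s') * h2 - f x * hħ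

/-- Corollary: representation of the Jost solution for small
`ν = 2E/ħ ≤ ν₀`: with `V(x;ħ) = e^{−x}(1+ε(e^{−x};ħ))` for `x > x₀`,
`φ` the Liouville–Green diffeomorphism onto `(0,w₀)` and `ǧ₋` the solution of the
normal form equation of the form `B₋(αw/ħ,ν)(1+ħ²č₋)` near `w = 0`, the outgoing
Jost solution satisfies, for all `x > x₀`,
`f₊(x,E;ħ) = 2^{−1/2+iν} ħ^{1/2−iν} e^{x/4} (∂_zφ((2/α)e^{−x/2}))^{−1/2}
  ǧ₋(φ((2/α)e^{−x/2}))`. -/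
theorem jost_solution_small_nu_representation
    (x₀ hb₀ ν₀ : ℝ) (hx₀ : x₀ < 0) (hhb₀ : 0 < hb₀) (hν₀ : 0 < ν₀)
    (ε : ℝ → ℝ → ℝ)
    (hε_smooth : ∀ hb ∈ Ioo (0:ℝ) hb₀, ContDiff ℝ (⊤ : ℕ∞) (fun s => ε s hb))
    (hε0 : ∀ hb ∈ Ioo (0:ℝ) hb₀, ε 0 hb = 0)
    (hεgt : ∀ hb ∈ Ioo (0:ℝ) hb₀, ∀ s ∈ Icc (0:ℝ) (Real.exp (-x₀)), -1 < ε s hb)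
    (hεbd : ∃ D : ℕ → ℝ, ∀ k : ℕ, ∀ hb ∈ Ioo (0:ℝ) hb₀,
      ∀ s ∈ Icc (0:ℝ) (Real.exp (-x₀)),
        |iteratedDeriv k (fun s' => ε s' hb) s| ≤ D k)
    -- fixed semiclassical parameters with 0 < ν = 2E/ħ ≤ ν₀
    (E hb : ℝ) (hhb : hb ∈ Ioo (0:ℝ) hb₀) (hE : E ∈ Ioc (0:ℝ) (ν₀*hb/2))
    -- the Liouville–Green diffeomorphism φ of (0, α⁻¹y₀) onto (0, w₀)
    (φ : ℝ → ℝ) (w₀ : ℝ)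
    (hφ_smooth : ContDiffOn ℝ (⊤ : ℕ∞) φ
      (Ioo 0 ((2*Real.exp (-x₀/2)) / alf hb E)))
    (hφ_bij : BijOn φ (Ioo 0 ((2*Real.exp (-x₀/2)) / alf hb E)) (Ioo 0 w₀))
    (hφ_LG : ∀ z ∈ Ioo (0:ℝ) ((2*Real.exp (-x₀/2)) / alf hb E),
      1 - 1/z^2 + ε ((hb^2/4 + 4*E^2)*z^2) hb = (deriv φ z)^2 * (1 - 1/(φ z)^2))
    (hφ_pos : ∀ z ∈ Ioo (0:ℝ) ((2*Real.exp (-x₀/2)) / alf hb E), 0 < deriv φ z)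
    (hφ0 : Tendsto (fun z => φ z / z) (𝓝[>] 0) (𝓝 1))
    (hφ0' : Tendsto (fun z => deriv φ z) (𝓝[>] 0) (𝓝 1))
    -- the normal form equation: −(ħ/α)²g'' + (1−1/w²)g = ħ²V₁ g, obtained from the
    -- original equation through the Liouville–Green transform induced by φ
    (V₁ : ℝ → ℝ)
    (hEquiv : ∀ f g : ℝ → ℂ,
      ContDiffOn ℝ 2 f (Ioi x₀) → ContDiffOn ℝ 2 g (Ioo 0 w₀) →
      (∀ x ∈ Ioi x₀,
        g (φ ((2/alf hb E)*Real.exp (-x/2)))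
          = ((Real.exp (-x/4) *
              Real.sqrt (deriv φ ((2/alf hb E)*Real.exp (-x/2))) : ℝ) : ℂ) * f x) →
      ((∀ w ∈ Ioo (0:ℝ) w₀,
          -((hb/alf hb E : ℝ) : ℂ)^2 * deriv (deriv g) w
              + ((1 - 1/w^2 : ℝ) : ℂ) * g w = ((hb^2 * V₁ w : ℝ) : ℂ) * g w) ↔
        (∀ x ∈ Ioi x₀,
          -(hb:ℂ)^2 * deriv (deriv f) x +
            ((Real.exp (-x) * (1 + ε (Real.exp (-x)) hb) : ℝ) - (E:ℂ)^2) * f x = 0)))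
    -- ǧ₋ : the solution of the normal form equation of the oscillatory form near 0
    (gm : ℝ → ℂ)
    (hg_smooth : ContDiffOn ℝ 2 gm (Ioo 0 w₀))
    (hg_ode : ∀ w ∈ Ioo (0:ℝ) w₀,
      -((hb/alf hb E : ℝ) : ℂ)^2 * deriv (deriv gm) w
          + ((1 - 1/w^2 : ℝ) : ℂ) * gm w = ((hb^2 * V₁ w : ℝ) : ℂ) * gm w)
    (hg_form : ∃ (w₁ M : ℝ) (bm cm : ℝ → ℂ), 0 < w₁ ∧ w₁ ≤ w₀ ∧ 0 < M ∧
      (∀ w ∈ Ioo (0:ℝ) w₁,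
        gm w = ((alf hb E * w / hb : ℝ) : ℂ) ^ ((1:ℂ)/2 - Complex.I * (2*E/hb : ℝ))
          * (1 + bm (alf hb E * w / hb)) * (1 + (hb:ℂ)^2 * cm w)) ∧
      (∀ v ∈ Ioo (0:ℝ) (alf hb E * w₁ / hb),
        ‖bm v‖ ≤ M * v^2 ∧ ‖deriv bm v‖ ≤ M * v) ∧
      (∀ w ∈ Ioo (0:ℝ) w₁, ‖cm w‖ ≤ M ∧ ‖deriv cm w‖ ≤ M / w))
    (hg_asym : Tendsto (fun w : ℝ =>
        gm w / ((hb:ℂ) ^ (-(1:ℂ)/2 + Complex.I * (2*E/hb : ℝ)) *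
          ((alf hb E * w : ℝ) : ℂ) ^ ((1:ℂ)/2 - Complex.I * (2*E/hb : ℝ))))
      (𝓝[>] 0) (𝓝 1))
    -- f : the outgoing Jost solution of −ħ²f'' + Vf = E²f on (x₀,∞)
    (f : ℝ → ℂ)
    (hf_smooth : ContDiffOn ℝ 2 f (Ioi x₀))
    (hf_ode : ∀ x ∈ Ioi x₀,
      -(hb:ℂ)^2 * deriv (deriv f) x +
        ((Real.exp (-x) * (1 + ε (Real.exp (-x)) hb) : ℝ) - (E:ℂ)^2) * f x = 0)
    (hf_lim : Tendsto (fun x : ℝ => f x * Complex.exp (-(Complex.I * E * x / hb)))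
      atTop (𝓝 1))
    (hf_lim' : Tendsto (fun x : ℝ => deriv f x * Complex.exp (-(Complex.I * E * x / hb)))
      atTop (𝓝 (Complex.I * E / hb))) :
    ∀ x ∈ Ioi x₀,
      f x = (2:ℂ) ^ (-(1:ℂ)/2 + Complex.I * (2*E/hb : ℝ))
        * (hb:ℂ) ^ ((1:ℂ)/2 - Complex.I * (2*E/hb : ℝ))
        * ((Real.exp (x/4) *
            (Real.sqrt (deriv φ ((2/alf hb E)*Real.exp (-x/2))))⁻¹ : ℝ) : ℂ)
        * gm (φ ((2/alf hb E)*Real.exp (-x/2))) :=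
  jost_solution_small_nu_representation_general x₀ hb₀ ν₀ ε E hb hhb hE φ w₀ hφ_smooth hφ_bij hφ_pos
    hφ0 hφ0' V₁ hEquiv gm hg_smooth hg_ode hg_asym f hf_smooth hf_ode hf_lim hf_lim'
end
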